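/- arXiv:2406.19772 — 7 statements merged into one kernel-verified Lean document; each statement's English description precedes it below -/
import Mathlib

section
/- Let $A$ be a commutative ring and $a_1,\ldots,a_r \in A$ elements not generating the unit ideal. If every permutation of the sequence $(a_1,\ldots,a_r)$ is a regular sequence, then every subsequence of $(a_1,\ldots,a_r)$ is a regular sequence. -/
namespace RingTheory.Sequence

lemma IsRegular.of_append_left {R M : Type*} [CommRing R] [AddCommGroup M] [Module R M]
    {rs₁ rs₂ : List R} (h : IsRegular M (rs₁ ++ rs₂)) : IsRegular M rs₁ where
  toIsWeaklyRegular := ((isWeaklyRegular_append_iff M rs₁ rs₂).mp h.toIsWeaklyRegular).1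
  top_ne_smul := by
    have hle : Ideal.ofList rs₁ • (⊤ : Submodule R M) ≤ Ideal.ofList (rs₁ ++ rs₂) • ⊤ :=
      Submodule.smul_mono_left (Ideal.ofList_append rs₁ rs₂ ▸ le_sup_left)
    exact fun htop => h.top_ne_smul (top_le_iff.mp (htop.le.trans hle)).symm

end RingTheory.Sequence

theorem stmt_0_general {A : Type*} [CommRing A] (as : List A)
    (hperm : ∀ bs : List A, bs.Perm as → RingTheory.Sequence.IsRegular A bs) :
    ∀ cs : List A, cs.Sublist as → RingTheory.Sequence.IsRegular A cs := by
  intro cs hsub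
  obtain ⟨ds, hds⟩ := hsub.exists_perm_append
  exact (hperm _ hds.symm).of_append_left

/-- If every permutation of `as` is a regular sequence (and `as` does not
generate the unit ideal), then every subsequence (sublist) of `as` is a regular sequence. -/
theorem stmt_0 {A : Type*} [CommRing A] (as : List A)
    (hunit : Ideal.span {a | a ∈ as} ≠ ⊤)
    (hperm : ∀ bs : List A, bs.Perm as → RingTheory.Sequence.IsRegular A bs) :
    ∀ cs : List A, cs.Sublist as → RingTheory.Sequence.IsRegular A cs :=
  stmt_0_general as hperm
end

section
/- Let $A$ be a commutative ring and $a_1,\ldots,a_r \in A$ elements not generating the unit ideal such that every subsequence of $(a_1,\ldots,a_r)$ is a regular sequence. Then every permutation of $(a_1,\ldots,a_r)$ is a regular sequence. -/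
open RingTheory.Sequence Submodule Ideal in
/-- If every subsequence (sublist) of `as` is a regular sequence (and `as`
does not generate the unit ideal), then every permutation of `as` is a regular sequence. -/
theorem stmt_1 {A : Type*} [CommRing A] (as : List A)
    (hunit : Ideal.span {a | a ∈ as} ≠ ⊤)
    (hsub : ∀ cs : List A, cs.Sublist as → RingTheory.Sequence.IsRegular A cs) :
    ∀ bs : List A, bs.Perm as → RingTheory.Sequence.IsRegular A bs := by
  have key : ∀ n (cs : List A), cs.length ≤ n → List.Subperm cs as → IsWeaklyRegular A cs := by
    intro n
    induction n with
    | zero =>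
      intro cs h _
      rw [List.length_eq_zero_iff.mp (Nat.le_zero.mp h)]
      exact .nil A A
    | succ n ih =>
      intro cs hlen hsp
      obtain ⟨l, hperm, hsl⟩ := hsp
      refine (hsub l hsl).toIsWeaklyRegular.prototype_perm hperm ?_
      intro a b rs' habsp
      have h1 : List.Subperm (rs' ++ [b]) l := by
        refine List.Subperm.trans ⟨b :: rs', List.perm_append_comm (l₁ := [b]) (l₂ := rs'), ?_⟩ habsp
        exact (List.sublist_cons_self a (b :: rs'))
      have hlen2 : (rs' ++ [b]).length ≤ n := by
        have h2 := habsp.length_le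
        have h3 := hperm.length_eq
        simp only [List.length_cons, List.length_append, List.length_singleton, List.length_nil] at h2 ⊢
        omega
      have hreg := ih (rs' ++ [b]) hlen2 (h1.trans hsl.subperm)
      rw [isWeaklyRegular_append_iff, isWeaklyRegular_singleton_iff] at hreg
      intro _
      have := (_root_.isSMulRegular_iff_torsionBy_eq_bot _ _).mp hreg.2
      exact fun _ => this
  intro bs hperm
  refine ⟨key as.length bs (le_of_eq hperm.length_eq) hperm.subperm, ?_⟩
  intro h
  apply hunit
  have hset : {a | a ∈ bs} = {a | a ∈ as} := Set.ext fun x => hperm.mem_iff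
  rw [← hset]
  have : Ideal.ofList bs • (⊤ : Submodule A A) = Ideal.ofList bs := by
    rw [smul_eq_mul, mul_top]
  rw [this] at h
  exact h.symm
end

section
/- Let $A$ be a commutative ring and $a_1,\ldots,a_r \in A$ elements not generating the unit ideal such that every permutation of $(a_1,\ldots,a_r)$ is a regular sequence. Then any element of $A$ that is divisible by each of $a_1,\ldots,a_r$ is divisible by the product $a_1 \cdots a_r$. -/
/-!
If `x = a * y` and `b ∣ x` with `a` a nonzerodivisor modulo `b`, then `b ∣ y`. Regularity of
every permutation makes each `aᵢ` a nonzerodivisor modulo every `aⱼ`, so one can peel off the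
factors one at a time: `x = a₁ y` and all the remaining `aⱼ` divide `y`.
-/

open RingTheory.Sequence
open scoped Pointwise

section

variable {A : Type*} [CommRing A]

theorem mem_smul_top_iff_dvd {b y : A} : y ∈ b • (⊤ : Submodule A A) ↔ b ∣ y := by
  simp [Submodule.mem_smul_pointwise_iff_exists, Dvd.dvd, eq_comm]

theorem dvd_of_dvd_mul_left_of_isSMulRegular_quotSMulTop {a b y : A}
    (ha : IsSMulRegular (QuotSMulTop b A) a) (h : b ∣ a * y) : b ∣ y := by
  have hay : a • (Submodule.Quotient.mk y : QuotSMulTop b A) = a • 0 := by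
    rwa [smul_zero, ← Submodule.Quotient.mk_smul, Submodule.Quotient.mk_eq_zero,
      mem_smul_top_iff_dvd]
  simpa only [Submodule.Quotient.mk_eq_zero, mem_smul_top_iff_dvd] using ha hay

theorem RingTheory.Sequence.IsWeaklyRegular.isSMulRegular_quotSMulTop_of_cons_cons
    {a b : A} {l : List A} (h : IsWeaklyRegular A (b :: a :: l)) :
    IsSMulRegular (QuotSMulTop b A) a :=
  ((isWeaklyRegular_cons_iff A b _).mp h).2 |> (isWeaklyRegular_cons_iff _ a l).mp |>.1

theorem List.prod_dvd_of_pairwise_isSMulRegular_quotSMulTop {as : List A}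
    (has : as.Pairwise fun a b => IsSMulRegular (QuotSMulTop b A) a) {x : A}
    (hx : ∀ a ∈ as, a ∣ x) : as.prod ∣ x := by
  induction has generalizing x with
  | nil => exact one_dvd x
  | @cons a t hreg _ ih =>
    obtain ⟨y, rfl⟩ := hx a mem_cons_self
    have hy : ∀ b ∈ t, b ∣ y := fun b hb =>
      dvd_of_dvd_mul_left_of_isSMulRegular_quotSMulTop (hreg b hb)
        (hx b (mem_cons_of_mem a hb))
    rw [prod_cons]
    exact mul_dvd_mul_left a (ih hy)

theorem List.pairwise_isSMulRegular_quotSMulTop_of_forall_perm {as : List A}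
    (h : ∀ bs : List A, bs.Perm as → IsWeaklyRegular A bs) :
    as.Pairwise fun a b => IsSMulRegular (QuotSMulTop b A) a := by
  refine pairwise_iff_forall_sublist.mpr fun {a b} hab => ?_
  obtain ⟨l, hl⟩ := hab.exists_perm_append
  exact (h (b :: a :: l) ((Perm.swap a b l).trans hl.symm)).isSMulRegular_quotSMulTop_of_cons_cons

end

theorem stmt_2_general {A : Type*} [CommRing A] (as : List A)
    (hperm : ∀ bs : List A, bs.Perm as → RingTheory.Sequence.IsRegular A bs) :
    ∀ x : A, (∀ a ∈ as, a ∣ x) → as.prod ∣ x := fun _ =>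
  as.prod_dvd_of_pairwise_isSMulRegular_quotSMulTop
    (List.pairwise_isSMulRegular_quotSMulTop_of_forall_perm fun bs hbs =>
      (hperm bs hbs).toIsWeaklyRegular)

/-- If every permutation of `as` is a regular sequence (and `as` does not
generate the unit ideal), then any element divisible by each `a ∈ as` is divisible by the
product of the `a`'s. -/
theorem stmt_2 {A : Type*} [CommRing A] (as : List A)
    (hunit : Ideal.span {a | a ∈ as} ≠ ⊤)
    (hperm : ∀ bs : List A, bs.Perm as → RingTheory.Sequence.IsRegular A bs) :
    ∀ x : A, (∀ a ∈ as, a ∣ x) → as.prod ∣ x :=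
  stmt_2_general as hperm
end

section
/- Let $R$ be a commutative ring and $\pi \in R$ a non-zero divisor. Then in the formal power series ring $R\llbracket T_0,\ldots,T_m \rrbracket$, the element $T_0 + \cdots + T_m - \pi$ is a non-zero divisor. -/
open scoped nonZeroDivisors

theorem neg_mem_nonZeroDivisors {R : Type*} [Ring R] {a : R} (ha : a ∈ R⁰) : -a ∈ R⁰ := by
  rw [← neg_one_mul]
  exact Submonoid.mul_mem _ isUnit_neg_one.mem_nonZeroDivisors ha

/-- If `π` is a non-zero divisor of `R`, then `T₀ + ⋯ + T_m - π` is a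
non-zero divisor in the formal power series ring `R⟦T₀, …, T_m⟧`. -/
theorem stmt_3 {R : Type*} [CommRing R] (π : R) (hπ : π ∈ nonZeroDivisors R) (m : ℕ) :
    (∑ i : Fin (m + 1), MvPowerSeries.X i) - (MvPowerSeries.C : R →+* MvPowerSeries (Fin (m + 1)) R) π
      ∈ nonZeroDivisors (MvPowerSeries (Fin (m + 1)) R) := by
  apply MvPowerSeries.mem_nonZeroDivisors_of_constantCoeff
  have hconst : MvPowerSeries.constantCoeff
      ((∑ i : Fin (m + 1), MvPowerSeries.X i) - MvPowerSeries.C π) = -π := by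
    simp
  rw [hconst]
  exact neg_mem_nonZeroDivisors hπ
end

section
/- Let $R$ be a commutative ring and let $R\Delta_\bullet$ be the simplicial ring with $R\Delta_m = R\llbracket T_0,\ldots,T_m \rrbracket$ and structure maps $T_i \mapsto \sum_{j \in \sigma^{-1}(i)} T_j$ for $\sigma : [n] \to [m]$. Then the canonical map $R\Delta_\bullet \to R$ (to the constant simplicial ring $R$) induced by $T_i \mapsto 0$ is a trivial Kan fibration of simplicial sets. -/
/-!
Through the isomorphisms `e`, the face map `d_i` of `S` is `killCompl (Fin.succAboveEmb i)`:
set `T_i = 0` and renumber the other variables. Indeed, a ring map out of `R⟦T₀, …, T_m⟧` that fixes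
`R` and sends every variable into `(T)` preserves each `(T)^n`, the ideal of series of order
`≥ n`; hence it is determined by the images of the variables, as polynomials are dense.

A boundary `∂Δ[k] ⟶ R∆` is then a family of faces `xᵢ ∈ R⟦T₀, …, T_{k-1}⟧` whose coefficients
agree wherever two faces overlap: by the simplicial identities for `k ≥ 2`, and for `k = 1`
because both constant terms are the prescribed `r ∈ R`. So the coefficient of the lift `y` at an
exponent `a` with `a i = 0` can be read off `xᵢ`; this `y` has faces `xᵢ` and constant term `r`.
-/

open CategoryTheory MvPowerSeries Simplicial SSet

namespace Finsupp

variable {M : Type*}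

theorem exists_embDomain_succAboveEmb_eq [Zero M] {n : ℕ} {i : Fin (n + 1)} {a : Fin (n + 1) →₀ M}
    (ha : a i = 0) : ∃ d, embDomain (Fin.succAboveEmb i) d = a := by
  refine ⟨_, embDomain_comapDomain fun t ht => Fin.exists_succAbove_eq ?_⟩
  rintro rfl
  exact (mem_support_iff.mp ht) ha

theorem exists_embDomain_of_embDomain_succAboveEmb_eq [AddCommMonoid M] {n : ℕ}
    {i j : Fin (n + 2)} (hij : i ≤ j) {b c : Fin (n + 2) →₀ M}
    (hbc : embDomain (Fin.succAboveEmb i.castSucc) b = embDomain (Fin.succAboveEmb j.succ) c) :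
    ∃ d, embDomain (Fin.succAboveEmb j) d = b ∧ embDomain (Fin.succAboveEmb i) d = c := by
  have hsucc : i.castSucc.succAbove j = j.succ :=
    Fin.succAbove_of_le_castSucc _ _ (Fin.castSucc_le_castSucc_iff.mpr hij)
  obtain ⟨d, rfl⟩ : ∃ d, embDomain (Fin.succAboveEmb j) d = b := by
    refine exists_embDomain_succAboveEmb_eq ?_
    have hb : embDomain (Fin.succAboveEmb i.castSucc) b j.succ = b j := by
      rw [← hsucc]; exact embDomain_apply_self _ b j
    have hc : embDomain (Fin.succAboveEmb j.succ) c j.succ = 0 :=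
      embDomain_of_notMem_range _ _ _ fun ⟨l, hl⟩ => Fin.succAbove_ne _ l hl
    exact hb.symm.trans ((DFunLike.congr_fun hbc _).trans hc)
  refine ⟨d, rfl, embDomain_injective (Fin.succAboveEmb j.succ) ?_⟩
  have hδ : (Fin.succAboveEmb i).trans (Fin.succAboveEmb j.succ) =
      (Fin.succAboveEmb j).trans (Fin.succAboveEmb i.castSucc) := by
    refine Function.Embedding.ext fun l => ?_
    exact congrArg (fun f => (SimplexCategory.Hom.toOrderHom f) l) (SimplexCategory.δ_comp_δ hij)
  rw [← hbc, ← embDomain_trans_apply, ← embDomain_trans_apply, hδ]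

end Finsupp

namespace MvPowerSeries

variable {σ τ R : Type*}

section CommSemiring

variable [CommSemiring R]

theorem le_order_of_mem_pow_span_X {x : MvPowerSeries σ R} {n : ℕ}
    (hx : x ∈ Ideal.span (Set.range X) ^ n) : (n : ℕ∞) ≤ x.order := by
  have one_le_order : ∀ m ∈ Ideal.span (Set.range (X : σ → MvPowerSeries σ R)), 1 ≤ m.order := by
    intro m hm
    refine one_le_order_iff_constCoeff_eq_zero.mpr (?_ : m ∈ RingHom.ker constantCoeff)
    refine Ideal.span_le.mpr ?_ hm
    rintro _ ⟨s, rfl⟩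
    simp
  induction hx using Submodule.pow_induction_on_left' with
  | algebraMap => simp
  | add x y i _ _ hx hy => exact le_trans (le_min hx hy) min_order_le_add
  | mem_mul m hm i x _ hx =>
    calc ((i + 1 : ℕ) : ℕ∞) = 1 + i := by push_cast; ring
      _ ≤ m.order + x.order := add_le_add (one_le_order m hm) hx
      _ ≤ (m * x).order := le_order_mul

theorem exists_eq_sum_X_mul [Fintype σ] {x : MvPowerSeries σ R} {n : ℕ}
    (hx : ((n + 1 : ℕ) : ℕ∞) ≤ x.order) :
    ∃ q : σ → MvPowerSeries σ R, x = ∑ s, X s * q s ∧ ∀ s, (n : ℕ∞) ≤ (q s).order := by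
  classical
  have hx0 : ∀ a : σ →₀ ℕ, Finsupp.degree a ≤ n → coeff a x = 0 := fun a ha =>
    coeff_of_lt_order (lt_of_lt_of_le (by exact_mod_cast Nat.lt_succ_of_le ha) hx)
  rcases isEmpty_or_nonempty σ with hσ | hσ
  · refine ⟨0, ?_, by simp⟩
    ext a
    rw [Subsingleton.elim a 0, hx0 0 (by simp)]
    simp
  have : ∀ a : σ →₀ ℕ, ∃ s, a ≠ 0 → s ∈ a.support := fun a => by
    by_cases ha : a = 0
    · exact ⟨Classical.arbitrary σ, fun h => (h ha).elim⟩
    · obtain ⟨s, hs⟩ := Finsupp.support_nonempty_iff.mpr ha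
      exact ⟨s, fun _ => hs⟩
  choose c hc using this
  obtain ⟨q, hq⟩ : ∃ q : σ → MvPowerSeries σ R, ∀ s d, coeff d (q s) =
      if c (d + Finsupp.single s 1) = s then coeff (d + Finsupp.single s 1) x else 0 :=
    ⟨fun s d => if c (d + Finsupp.single s 1) = s then coeff (d + Finsupp.single s 1) x else 0,
      fun _ _ => rfl⟩
  refine ⟨q, ?_, fun s => nat_le_order fun d hd => ?_⟩
  · ext a
    simp only [map_sum, X_def]
    by_cases ha : a = 0
    · subst ha
      rw [hx0 0 (by simp)]
      refine (Finset.sum_eq_zero fun s _ => ?_).symm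
      rw [coeff_monomial_mul, if_neg (by simp)]
    · calc coeff a x = ∑ s, if c a = s then coeff a x else 0 := by rw [Finset.sum_ite_eq]; simp
        _ = _ := Finset.sum_congr rfl fun s _ => ?_
      rw [coeff_monomial_mul]
      by_cases hs : Finsupp.single s 1 ≤ a
      · rw [if_pos hs, one_mul, hq, tsub_add_cancel_of_le hs]
      · refine (if_neg fun h => hs ?_).trans (if_neg hs).symm
        rw [← h, Finsupp.single_le_iff, Nat.one_le_iff_ne_zero, ← Finsupp.mem_support_iff]
        exact hc a ha
  · rw [hq]
    split_ifs
    · exact hx0 _ (by simp only [map_add, Finsupp.degree_single]; omega)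
    · rfl

theorem mem_pow_span_X_iff [Finite σ] {x : MvPowerSeries σ R} {n : ℕ} :
    x ∈ Ideal.span (Set.range X) ^ n ↔ (n : ℕ∞) ≤ x.order := by
  cases nonempty_fintype σ
  refine ⟨le_order_of_mem_pow_span_X, fun hx => ?_⟩
  induction n generalizing x with
  | zero => simp
  | succ n ih =>
    obtain ⟨q, rfl, hq⟩ := exists_eq_sum_X_mul hx
    rw [pow_succ']
    exact Ideal.sum_mem _ fun s _ =>
      Ideal.mul_mem_mul (Ideal.subset_span ⟨s, rfl⟩) (ih (hq s))

theorem map_mem_pow_span_X {F : MvPowerSeries σ R →+* MvPowerSeries τ R}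
    (hF : ∀ s, F (X s) ∈ Ideal.span (Set.range X)) {x : MvPowerSeries σ R} {n : ℕ}
    (hx : x ∈ Ideal.span (Set.range X) ^ n) : F x ∈ Ideal.span (Set.range X) ^ n := by
  have hmap : (Ideal.span (Set.range X)).map F ≤ Ideal.span (Set.range X) := by
    rw [Ideal.map_span, Ideal.span_le]
    rintro _ ⟨_, ⟨s, rfl⟩, rfl⟩
    exact hF s
  exact Ideal.pow_right_mono hmap n (Ideal.map_pow F _ n ▸ Ideal.mem_map_of_mem F hx)

theorem sum_ite_X_eq_killCompl_X [Fintype τ] [DecidableEq σ] (e : τ ↪ σ) (s : σ) :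
    (∑ t, if e t = s then X t else 0) = killCompl (R := R) e (X s) := by
  by_cases hs : s ∈ Set.range e
  · obtain ⟨t, rfl⟩ := hs
    rw [killCompl_X, Finset.sum_eq_single t (fun t' _ h => if_neg (e.injective.ne h)) (by simp),
      if_pos rfl]
  · rw [killCompl_X_eq_zero hs]
    exact Finset.sum_eq_zero fun t _ => if_neg fun h => hs ⟨t, h⟩

theorem constantCoeff_killCompl (e : τ ↪ σ) (p : MvPowerSeries σ R) :
    constantCoeff (killCompl e p) = constantCoeff p := by
  rw [← coeff_zero_eq_constantCoeff_apply, coeff_killCompl, Finsupp.embDomain_zero,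
    coeff_zero_eq_constantCoeff_apply]

theorem exists_killCompl_eq {ι : Type*} {τ : ι → Type*} (e : ∀ i, τ i ↪ σ)
    (x : ∀ i, MvPowerSeries (τ i) R)
    (hx : ∀ i j b c, Finsupp.embDomain (e i) b = Finsupp.embDomain (e j) c →
      coeff b (x i) = coeff c (x j)) :
    ∃ y : MvPowerSeries σ R, ∀ i, killCompl (e i) y = x i := by
  classical
  obtain ⟨y, hy⟩ : ∃ y : MvPowerSeries σ R, ∀ a, coeff a y =
      if h : ∃ i b, Finsupp.embDomain (e i) b = a then coeff h.choose_spec.choose (x h.choose)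
      else 0 := ⟨fun a => _, fun _ => rfl⟩
  refine ⟨y, fun i => ext fun b => ?_⟩
  have hb : ∃ j c, Finsupp.embDomain (e j) c = Finsupp.embDomain (e i) b := ⟨i, b, rfl⟩
  rw [coeff_killCompl, hy, dif_pos hb]
  exact hx _ _ _ _ hb.choose_spec.choose_spec

theorem exists_killCompl_succAboveEmb_eq {n : ℕ}
    (x : Fin (n + 3) → MvPowerSeries (Fin (n + 2)) R)
    (hx : ∀ i j : Fin (n + 2), i ≤ j →
      killCompl (Fin.succAboveEmb i) (x j.succ) = killCompl (Fin.succAboveEmb j) (x i.castSucc)) :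
    ∃ y, ∀ i, killCompl (Fin.succAboveEmb i) y = x i := by
  have hlt : ∀ i j b c, i < j →
      Finsupp.embDomain (Fin.succAboveEmb i) b = Finsupp.embDomain (Fin.succAboveEmb j) c →
      coeff b (x i) = coeff c (x j) := by
    intro i j b c hij hbc
    obtain ⟨i, rfl⟩ := Fin.exists_castSucc_eq.mpr (Fin.ne_last_of_lt hij)
    obtain ⟨j, rfl⟩ := Fin.exists_succ_eq.mpr (Fin.ne_zero_of_lt hij)
    obtain ⟨d, rfl, rfl⟩ :=
      Finsupp.exists_embDomain_of_embDomain_succAboveEmb_eq (Fin.castSucc_lt_succ_iff.mp hij) hbc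
    rw [← coeff_killCompl, ← coeff_killCompl, hx i j (Fin.castSucc_lt_succ_iff.mp hij)]
  refine exists_killCompl_eq _ x fun i j b c hbc => ?_
  rcases lt_trichotomy i j with h | rfl | h
  · exact hlt i j b c h hbc
  · rw [Finsupp.embDomain_injective _ hbc]
  · exact (hlt j i c b h hbc.symm).symm

theorem exists_killCompl_succAboveEmb_eq_of_constantCoeff_eq
    (x : Fin 2 → MvPowerSeries (Fin 1) R) {r : R} (hx : ∀ i, constantCoeff (x i) = r) :
    ∃ y, ∀ i, killCompl (Fin.succAboveEmb i) y = x i := by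
  have hzero : ∀ i j (b c : Fin 1 →₀ ℕ), i ≠ j →
      Finsupp.embDomain (Fin.succAboveEmb i) b = Finsupp.embDomain (Fin.succAboveEmb j) c →
      b = 0 := by
    intro i j b c hij hbc
    obtain ⟨l, hl⟩ := Fin.exists_succAbove_eq hij.symm
    have hb : Finsupp.embDomain (Fin.succAboveEmb i) b j = b l := by
      rw [← hl]; exact Finsupp.embDomain_apply_self _ b l
    have hc : Finsupp.embDomain (Fin.succAboveEmb j) c j = 0 :=
      Finsupp.embDomain_of_notMem_range _ _ _ fun ⟨l, hl⟩ => Fin.succAbove_ne _ l hl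
    refine Finsupp.ext fun l' => ?_
    rw [Subsingleton.elim l' l]
    exact hb.symm.trans ((DFunLike.congr_fun hbc _).trans hc)
  refine exists_killCompl_eq _ x fun i j b c hbc => ?_
  rcases eq_or_ne i j with rfl | hij
  · rw [Finsupp.embDomain_injective _ hbc]
  · rw [hzero i j b c hij hbc, hzero j i c b hij.symm hbc.symm, coeff_zero_eq_constantCoeff_apply,
      coeff_zero_eq_constantCoeff_apply, hx, hx]

end CommSemiring

section CommRing

variable [CommRing R]

theorem ringHom_ext_of_map_X_mem [Finite σ] {F G : MvPowerSeries σ R →+* MvPowerSeries τ R}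
    (hC : ∀ r, F (C r) = G (C r)) (hX : ∀ s, F (X s) = G (X s))
    (hF : ∀ s, F (X s) ∈ Ideal.span (Set.range X)) : F = G := by
  have hG : ∀ s, G (X s) ∈ Ideal.span (Set.range X) := fun s => hX s ▸ hF s
  have hpoly : F.comp MvPolynomial.coeToMvPowerSeries.ringHom =
      G.comp MvPolynomial.coeToMvPowerSeries.ringHom :=
    MvPolynomial.ringHom_ext (fun r => by simpa using hC r) (fun s => by simpa using hX s)
  ext x d
  set n := Finsupp.degree d + 1
  set P : MvPowerSeries σ R := ↑(truncTotal n x)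
  have hP : x - P ∈ Ideal.span (Set.range X) ^ n := by
    refine mem_pow_span_X_iff.mpr (nat_le_order fun a ha => ?_)
    rw [map_sub, MvPolynomial.coeff_coe, coeff_truncTotal x ha, sub_self]
  have hFG : F P = G P := RingHom.congr_fun hpoly (truncTotal n x)
  have hdiff := Ideal.sub_mem _ (map_mem_pow_span_X hF hP) (map_mem_pow_span_X hG hP)
  rw [map_sub, map_sub, hFG, sub_sub_sub_cancel_right] at hdiff
  rw [← sub_eq_zero, ← map_sub]
  exact coeff_of_lt_order <|
    lt_of_lt_of_le (by exact_mod_cast Nat.lt_succ_self _) (le_order_of_mem_pow_span_X hdiff)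

theorem eq_killCompl_of_map_C_of_map_X [Finite σ] [Fintype τ] [DecidableEq σ] (e : τ ↪ σ)
    (D : MvPowerSeries σ R →+* MvPowerSeries τ R) (hC : ∀ r, D (C r) = C r)
    (hX : ∀ s, D (X s) = ∑ t, if e t = s then X t else 0) (x : MvPowerSeries σ R) :
    D x = killCompl e x := by
  have hD : D = (killCompl (R := R) e).toRingHom := by
    refine ringHom_ext_of_map_X_mem (fun r => ?_) (fun s => ?_) (fun s => ?_)
    · rw [hC]; exact (killCompl_C r).symm
    · rw [hX]; exact sum_ite_X_eq_killCompl_X e s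
    · rw [hX]
      exact Ideal.sum_mem _ fun t _ => by
        split_ifs
        · exact Ideal.subset_span ⟨t, rfl⟩
        · exact zero_mem _
  rw [hD]; rfl

end CommRing

end MvPowerSeries

namespace SSet

variable {X Y : SSet.{u}} {p : X ⟶ Y}

lemma yonedaEquiv_δ_comp {n : ℕ} (i : Fin (n + 2)) (g : Δ[n + 1] ⟶ X) :
    yonedaEquiv (stdSimplex.δ i ≫ g) = X.δ i (yonedaEquiv g) :=
  (yonedaEquiv_naturality (SimplexCategory.δ i) g).symm

lemma boundary.ι_comp_yonedaEquiv_symm_of_δ_eq {n : ℕ} {u : (∂Δ[n + 1] : SSet) ⟶ X} (y : X _⦋n + 1⦌)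
    (hy : ∀ i, X.δ i y = yonedaEquiv (boundary.ι i ≫ u)) :
    ∂Δ[n + 1].ι ≫ yonedaEquiv.symm y = u := by
  refine boundary.hom_ext fun i => yonedaEquiv.injective ?_
  rw [boundary.ι_ι_assoc, ← hy, yonedaEquiv_δ_comp, Equiv.apply_symm_apply]

lemma boundary.δ_yonedaEquiv_ι_succ_comp {n : ℕ} (u : (∂Δ[n + 2] : SSet) ⟶ X)
    {i j : Fin (n + 2)} (h : i ≤ j) :
    X.δ i (yonedaEquiv (boundary.ι j.succ ≫ u)) =
      X.δ j (yonedaEquiv (boundary.ι i.castSucc ≫ u)) := by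
  have : stdSimplex.δ i ≫ boundary.ι j.succ =
      stdSimplex.δ j ≫ boundary.ι (n := n + 1) i.castSucc := by
    rw [← cancel_mono ∂Δ[n + 2].ι]
    simpa only [Category.assoc, boundary.ι_ι] using CosimplicialObject.δ_comp_δ _ h
  rw [← yonedaEquiv_δ_comp, ← yonedaEquiv_δ_comp, ← Category.assoc, this, Category.assoc]

lemma boundary.app_yonedaEquiv_ι_comp {n : ℕ} {u : (∂Δ[n + 1] : SSet) ⟶ X} {v : Δ[n + 1] ⟶ Y}
    (sq : CommSq u ∂Δ[n + 1].ι p v) (i : Fin (n + 2)) :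
    p.app _ (yonedaEquiv (boundary.ι i ≫ u)) = Y.δ i (yonedaEquiv v) := by
  rw [← yonedaEquiv_comp, Category.assoc, sq.w, boundary.ι_ι_assoc, yonedaEquiv_δ_comp]

lemma boundary.hasLift_of_simplex {k : ℕ} {u : (∂Δ[k] : SSet) ⟶ X} {v : Δ[k] ⟶ Y}
    (sq : CommSq u ∂Δ[k].ι p v) (y : X _⦋k⦌) (hu : ∂Δ[k].ι ≫ yonedaEquiv.symm y = u)
    (hv : p.app _ y = yonedaEquiv v) : sq.HasLift :=
  ⟨⟨{ l := yonedaEquiv.symm y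
      fac_left := hu
      fac_right := by rw [yonedaEquiv_symm_comp, hv, Equiv.symm_apply_apply] }⟩⟩

end SSet

/-- Let `R∆_•` be the simplicial ring with `R∆_m = R⟦T₀, …, T_m⟧` and
structure maps `T_i ↦ ∑_{j ∈ σ⁻¹(i)} T_j` for `σ : [n] → [m]`.  (A simplicial object `S`
in commutative rings is *the* simplicial ring `R∆_•` when it is equipped with degreewise
ring isomorphisms `e_k : R⟦T₀, …, T_k⟧ ≅ S([k])` under which the structure maps are
`R`-algebra homomorphisms sending `T_i` to `∑_{j ∈ σ⁻¹(i)} T_j` and respecting the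
filtration by powers of the ideal `(T₀, …, T_k)`; these conditions characterize the
continuous substitution homomorphisms.)  Then the canonical map `R∆_• → R` to the
constant simplicial ring `R`, induced by `T_i ↦ 0` (the constant coefficient), is a
trivial Kan fibration of underlying simplicial sets, i.e. it has the right lifting
property against all boundary inclusions `∂Δ[k] ⟶ Δ[k]`. -/
theorem stmt_8 (R : Type) [CommRing R]
    (S : SimplicialObject CommRingCat.{0})
    (e : ∀ k : ℕ, CommRingCat.of (MvPowerSeries (Fin (k + 1)) R) ≅
      S.obj (Opposite.op (SimplexCategory.mk k)))
    -- the structure maps are the substitutions `T_i ↦ ∑_{j ∈ σ⁻¹(i)} T_j` :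
    (hmap : ∀ (n m : ℕ) (σ : SimplexCategory.mk n ⟶ SimplexCategory.mk m),
      (∀ r : R, ((e m).hom ≫ S.map σ.op ≫ (e n).inv) (MvPowerSeries.C (σ := Fin (m + 1)) (R := R) r) =
        MvPowerSeries.C (σ := Fin (n + 1)) (R := R) r) ∧
      (∀ i : Fin (m + 1), ((e m).hom ≫ S.map σ.op ≫ (e n).inv) (MvPowerSeries.X i) =
        ∑ j : Fin (n + 1), if σ.toOrderHom j = i then MvPowerSeries.X j else 0) ∧
      (∀ (l : ℕ) (x : MvPowerSeries (Fin (m + 1)) R),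
        x ∈ (Ideal.span (Set.range (MvPowerSeries.X : Fin (m + 1) → _))) ^ l →
        ((e m).hom ≫ S.map σ.op ≫ (e n).inv) x ∈
          (Ideal.span (Set.range (MvPowerSeries.X : Fin (n + 1) → _))) ^ l))
    -- the canonical augmentation `T_i ↦ 0` to the constant simplicial ring `R` :
    (f : S ⟶ (Functor.const SimplexCategoryᵒᵖ).obj (CommRingCat.of R))
    (hf : ∀ k : ℕ, (e k).hom ≫ f.app (Opposite.op (SimplexCategory.mk k)) =
      CommRingCat.ofHom (MvPowerSeries.constantCoeff (σ := Fin (k + 1)) (R := R)))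
    (k : ℕ) :
    HasLiftingProperty (SSet.boundary k).ι
      (((SimplicialObject.whiskering CommRingCat.{0} (Type 0)).obj (forget CommRingCat)).map f) := by
  have hface : ∀ (n : ℕ) (i : Fin (n + 2)) (y : MvPowerSeries (Fin (n + 2)) R),
      S.δ i ((e (n + 1)).hom y) = (e n).hom (killCompl (Fin.succAboveEmb i) y) := by
    intro n i y
    obtain ⟨hC, hX, -⟩ := hmap n (n + 1) (SimplexCategory.δ i)
    rw [← eq_killCompl_of_map_C_of_map_X (Fin.succAboveEmb i) _ hC hX y]
    simp [SimplicialObject.δ]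
  set p := ((SimplicialObject.whiskering CommRingCat (Type 0)).obj (forget CommRingCat)).map f
  have haug : ∀ (n : ℕ) (y : MvPowerSeries (Fin (n + 1)) R),
      p.app _ ((e n).hom y) = constantCoeff y := fun n y =>
    congrArg (fun g => g.hom y) (hf n)
  refine ⟨fun {u v} sq => ?_⟩
  -- the simplices of the constant simplicial set are the elements of `R`
  obtain ⟨r, hr⟩ : ∃ r : R, yonedaEquiv v = r := ⟨_, rfl⟩
  rcases k with _ | n
  · refine boundary.hasLift_of_simplex sq ((e 0).hom (C r)) (boundary.hom_ext₀) ?_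
    rw [haug, hr]
    exact constantCoeff_C r
  let x i := (e n).inv (yonedaEquiv (boundary.ι i ≫ u))
  have hx : ∀ i, (e n).hom (x i) = yonedaEquiv (boundary.ι i ≫ u) := fun i =>
    Iso.inv_hom_id_apply (e n) _
  have hconst : ∀ i, constantCoeff (x i) = r := fun i => by
    rw [← haug, hx, boundary.app_yonedaEquiv_ι_comp sq, hr]
    rfl
  obtain ⟨y, hy⟩ : ∃ y, ∀ i, killCompl (Fin.succAboveEmb i) y = x i := by
    rcases n with _ | n
    · exact exists_killCompl_succAboveEmb_eq_of_constantCoeff_eq x hconst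
    · refine exists_killCompl_succAboveEmb_eq x fun i j hij =>
        (e n).commRingCatIsoToRingEquiv.injective ?_
      change (e n).hom _ = (e n).hom _
      rw [← hface, ← hface, hx, hx]
      exact boundary.δ_yonedaEquiv_ι_succ_comp u hij
  refine boundary.hasLift_of_simplex sq ((e (n + 1)).hom y)
    (boundary.ι_comp_yonedaEquiv_symm_of_δ_eq _ fun i => ?_) ?_
  · rw [← hx, ← hy]
    exact hface n i y
  · rw [haug, hr, ← hconst 0, ← hy 0, constantCoeff_killCompl]
end

section
/- Let $R$ be a commutative ring, $\pi \in R$ a non-zero divisor, and for each $n \geq 1$ let $M_n$ be a flat $R/(\pi^n)$-module, with surjective transition maps $M_{n+1} \to M_n$ identifying $M_n \cong M_{n+1}/\pi^n M_{n+1}$. Then multiplication by $\pi$ is injective on $M = \lim_n M_n$ and $M/\pi M \cong M_1$. -/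
/-!
Over `A = R/(π^n)` the sequence `A --π^(n-1)--> A --π--> A` is exact because `π` is a
non-zero divisor; tensoring with the flat `A`-module `M_n` gives `M_n[π] = π^(n-1) M_n`.
So if `π x = 0` in the limit, then `x_n = t(x_{n+1}) ∈ t(π^n M_{n+1}) = π^n M_n = 0`.
If `x_1 = 0`, lifting along the surjections with kernels `π^n M_{n+1}` shows that every `x_n` is
divisible by `π`, say `x_{n+1} = π w_n`. The elements `t(w_n) ∈ M_n` are compatible: `w_n` and
`t(w_{n+1})` differ by `π`-torsion of `M_{n+1}`, which is `π^n M_{n+1} = ker t`.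
-/

open Pointwise

/-- The limit `lim_n M_n` of an inverse system of modules, realized as the submodule of
compatible families in the product.  Here `M n` plays the role of `M_{n+1}`. -/
def invLimit {R : Type} [CommRing R] (M : ℕ → Type)
    [∀ n, AddCommGroup (M n)] [∀ n, Module R (M n)]
    (t : ∀ n, M (n + 1) →ₗ[R] M n) : Submodule R (∀ n, M n) where
  carrier := {f | ∀ n, t n (f (n + 1)) = f n}
  add_mem' {f g} hf hg n := by simp [map_add, hf n, hg n]
  zero_mem' n := by simp
  smul_mem' r f hf n := by simp [map_smul, hf n]

lemma Module.Flat.exact_smul_of_exact_smul {A N : Type*} [CommRing A] [AddCommGroup N]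
    [Module A N] [Module.Flat A N] {a b : A}
    (h : Function.Exact (b • · : A → A) (a • · : A → A)) :
    Function.Exact (b • · : N → N) (a • · : N → N) := by
  have hcomm : ∀ c : A, LinearMap.lsmul A N c ∘ₗ (TensorProduct.rid A N).toLinearMap =
      (TensorProduct.rid A N).toLinearMap ∘ₗ (LinearMap.lsmul A A c).lTensor N := fun c ↦
    TensorProduct.ext' fun x d ↦ by simp [mul_comm c d, mul_smul]
  exact Function.Exact.of_ladder_linearEquiv_of_exact (hcomm b) (hcomm a)
    (Module.Flat.lTensor_exact N (f := LinearMap.lsmul A A b) (g := LinearMap.lsmul A A a) h)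

lemma Ideal.Quotient.exact_smul_pow_smul {R : Type*} [CommRing R] {π : R}
    (hπ : π ∈ nonZeroDivisors R) (n : ℕ) :
    Function.Exact (mk (span {π ^ (n + 1)}) (π ^ n) • · : R ⧸ span {π ^ (n + 1)} → _)
      (mk (span {π ^ (n + 1)}) π • ·) := by
  intro c
  obtain ⟨r, rfl⟩ := mk_surjective c
  simp only [smul_eq_mul, ← map_mul, Set.mem_range]
  constructor
  · intro h
    obtain ⟨s, hs⟩ := mem_span_singleton'.mp (eq_zero_iff_mem.mp h)
    have hr : r = s * π ^ n := by
      refine sub_eq_zero.mp (hπ.2 _ ?_)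
      linear_combination -hs
    exact ⟨mk _ s, by rw [← map_mul, hr, mul_comm]⟩
  · rintro ⟨d, hd⟩
    rw [map_mul, ← hd, ← mul_assoc, ← map_mul, ← pow_succ',
      eq_zero_iff_mem.mpr (mem_span_singleton_self _), zero_mul]

lemma smul_eq_zero_of_mem_of_quotient_smul {R N : Type*} [CommRing R] {I : Ideal R}
    [AddCommGroup N] [Module R N] [Module (R ⧸ I) N]
    (hsc : ∀ (r : R) (x : N), Ideal.Quotient.mk I r • x = r • x) {r : R} (hr : r ∈ I)
    (x : N) : r • x = 0 := by
  rw [← hsc, Ideal.Quotient.eq_zero_iff_mem.mpr hr, zero_smul]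

lemma exists_pow_smul_eq_of_smul_eq_zero {R N : Type*} [CommRing R] [AddCommGroup N]
    [Module R N] {π : R} (hπ : π ∈ nonZeroDivisors R) {n : ℕ}
    [Module (R ⧸ Ideal.span {π ^ (n + 1)}) N] [Module.Flat (R ⧸ Ideal.span {π ^ (n + 1)}) N]
    (hsc : ∀ (r : R) (x : N), Ideal.Quotient.mk (Ideal.span {π ^ (n + 1)}) r • x = r • x)
    {x : N} (hx : π • x = 0) : ∃ y : N, π ^ n • y = x := by
  rw [← hsc] at hx
  obtain ⟨y, hy⟩ := (Module.Flat.exact_smul_of_exact_smul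
    (Ideal.Quotient.exact_smul_pow_smul hπ n) x).mp hx
  exact ⟨y, by rw [← hsc]; exact hy⟩

namespace invLimit

variable {R : Type} [CommRing R] {π : R} {M : ℕ → Type} [∀ n, AddCommGroup (M n)]
  [∀ n, Module R (M n)] {t : ∀ n, M (n + 1) →ₗ[R] M n}

lemma apply_succ (x : invLimit M t) (n : ℕ) :
    t n ((x : ∀ n, M n) (n + 1)) = (x : ∀ n, M n) n :=
  x.2 n

lemma eq_zero_of_smul_eq_zero (hkill : ∀ n (x : M n), π ^ (n + 1) • x = 0)
    (htors : ∀ n (x : M n), π • x = 0 → ∃ y, π ^ n • y = x)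
    {x : invLimit M t} (hx : π • x = 0) : x = 0 := by
  refine Subtype.ext (funext fun n ↦ ?_)
  obtain ⟨y, hy⟩ := htors (n + 1) _ (congrFun (congrArg Subtype.val hx) (n + 1))
  change (x : ∀ n, M n) n = 0
  rw [← apply_succ, ← hy, map_smul, hkill]

lemma eval_zero_surjective (hsurj : ∀ n, Function.Surjective (t n)) :
    Function.Surjective fun x : invLimit M t ↦ (x : ∀ n, M n) 0 := fun y ↦
  ⟨⟨fun n ↦ Nat.rec y (fun k z ↦ (hsurj k z).choose) n, fun n ↦ (hsurj n _).choose_spec⟩,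
    rfl⟩

lemma exists_smul_eq_apply_of_eval_zero_eq_zero (hsurj : ∀ n, Function.Surjective (t n))
    (hker : ∀ n, LinearMap.ker (t n) ≤ π ^ (n + 1) • (⊤ : Submodule R (M (n + 1))))
    {x : invLimit M t} (h0 : (x : ∀ n, M n) 0 = 0) (n : ℕ) :
    ∃ y : M n, π • y = (x : ∀ n, M n) n := by
  induction n with
  | zero => exact ⟨0, by rw [smul_zero, h0]⟩
  | succ n ih =>
    obtain ⟨y, hy⟩ := ih
    obtain ⟨z, rfl⟩ := hsurj n y
    have hmem : (x : ∀ n, M n) (n + 1) - π • z ∈ LinearMap.ker (t n) := by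
      rw [LinearMap.mem_ker, map_sub, map_smul, hy, apply_succ, sub_self]
    obtain ⟨u, -, hu⟩ := Set.mem_smul_set.mp (hker n hmem)
    refine ⟨z + π ^ n • u, ?_⟩
    rw [smul_add, smul_smul, ← pow_succ', hu, add_sub_cancel]

lemma mem_smul_top_of_eval_zero_eq_zero (hkill : ∀ n (x : M n), π ^ (n + 1) • x = 0)
    (htors : ∀ n (x : M n), π • x = 0 → ∃ y, π ^ n • y = x)
    (hsurj : ∀ n, Function.Surjective (t n))
    (hker : ∀ n, LinearMap.ker (t n) ≤ π ^ (n + 1) • (⊤ : Submodule R (M (n + 1))))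
    {x : invLimit M t} (h0 : (x : ∀ n, M n) 0 = 0) :
    x ∈ π • (⊤ : Submodule R (invLimit M t)) := by
  choose w hw using fun n ↦ exists_smul_eq_apply_of_eval_zero_eq_zero hsurj hker h0 (n + 1)
  have compat : ∀ n, t n (t (n + 1) (w (n + 1))) = t n (w n) := by
    intro n
    have htor : π • (t (n + 1) (w (n + 1)) - w n) = 0 := by
      rw [smul_sub, ← map_smul, hw, hw, apply_succ, sub_self]
    obtain ⟨u, hu⟩ := htors (n + 1) _ htor
    rw [← sub_eq_zero, ← map_sub, ← hu, map_smul, hkill]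
  have hx : x = π • (⟨fun n ↦ t n (w n), compat⟩ : invLimit M t) :=
    Subtype.ext (funext fun n ↦ by
      change (x : ∀ n, M n) n = π • t n (w n)
      rw [← map_smul, hw, apply_succ])
  rw [hx]
  exact Submodule.smul_mem_pointwise_smul _ π ⊤ trivial

lemma eval_zero_eq_zero_of_mem_smul_top (hkill : ∀ x : M 0, π • x = 0) {x : invLimit M t}
    (hx : x ∈ π • (⊤ : Submodule R (invLimit M t))) : (x : ∀ n, M n) 0 = 0 := by
  obtain ⟨y, -, rfl⟩ := Set.mem_smul_set.mp hx
  exact hkill _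

end invLimit

/-- Let `π ∈ R` be a non-zero divisor and `(M_n)_{n ≥ 1}` an inverse
system where `M_n` is a flat `R/(π^n)`-module, with surjective transition maps
`M_{n+1} → M_n` whose kernel is `π^n M_{n+1}` (i.e. identifying `M_n ≅ M_{n+1}/π^n`).
Then multiplication by `π` is injective on `M = lim_n M_n`, and the projection
`M → M_1` is surjective with kernel `πM`, i.e. `M/πM ≅ M_1`.
(Indexing: `M n` is `M_{n+1}`.) -/
theorem stmt_15 {R : Type} [CommRing R] (π : R) (hπ : π ∈ nonZeroDivisors R)
    (M : ℕ → Type) [∀ n, AddCommGroup (M n)] [∀ n, Module R (M n)]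
    [Mod : ∀ n, Module (R ⧸ Ideal.span {π ^ (n + 1)}) (M n)]
    (hsc : ∀ n (r : R) (x : M n),
      (Ideal.Quotient.mk (Ideal.span {π ^ (n + 1)}) r) • x = r • x)
    (hflat : ∀ n, Module.Flat (R ⧸ Ideal.span {π ^ (n + 1)}) (M n))
    (t : ∀ n, M (n + 1) →ₗ[R] M n)
    (hsurj : ∀ n, Function.Surjective (t n))
    (hker : ∀ n, LinearMap.ker (t n) =
      (π ^ (n + 1)) • (⊤ : Submodule R (M (n + 1)))) :
    (∀ x : invLimit M t, π • x = 0 → x = 0) ∧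
      Function.Surjective (fun x : invLimit M t => (x : ∀ n, M n) 0) ∧
      (∀ x : invLimit M t, (x : ∀ n, M n) 0 = 0 ↔
        x ∈ π • (⊤ : Submodule R (invLimit M t))) := by
  have hkill : ∀ n (x : M n), π ^ (n + 1) • x = 0 := fun n ↦
    smul_eq_zero_of_mem_of_quotient_smul (hsc n) (Ideal.mem_span_singleton_self _)
  have htors : ∀ n (x : M n), π • x = 0 → ∃ y, π ^ n • y = x := fun n _ ↦
    exists_pow_smul_eq_of_smul_eq_zero hπ (hsc n)
  have hker' : ∀ n, LinearMap.ker (t n) ≤ π ^ (n + 1) • ⊤ := fun n ↦ (hker n).le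
  refine ⟨fun x ↦ invLimit.eq_zero_of_smul_eq_zero hkill htors,
    invLimit.eval_zero_surjective hsurj,
    fun x ↦ ⟨invLimit.mem_smul_top_of_eval_zero_eq_zero hkill htors hsurj hker',
      invLimit.eval_zero_eq_zero_of_mem_smul_top fun y ↦ by simpa using hkill 0 y⟩⟩
end

section
/- Let $R$ be a commutative ring and $\pi \in R$ a non-zero divisor. For a flat $R/(\pi^n)$-module $M$, the $\pi$-torsion submodule $M[\pi] = \{m \in M : \pi m = 0\}$ equals $\pi^{n-1} M$. -/
open Pointwise

section Aux

variable {S : Type} [CommRing S] {M : Type} [AddCommGroup M] [Module S M]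

lemma lTensor_lsmul_eq (a : S) (y : TensorProduct S M S) :
    LinearMap.lTensor M (LinearMap.lsmul S S a) y = a • y := by
  induction y using TensorProduct.induction_on with
  | zero => simp
  | tmul m s =>
      show m ⊗ₜ[S] (a • s) = a • (m ⊗ₜ[S] s)
      rw [TensorProduct.tmul_smul]
  | add u v hu hv => simp [map_add, hu, hv, smul_add]

end Aux

/-- Let `π ∈ R` be a non-zero divisor and `M` a flat `R/(π^n)`-module
(`n ≥ 1`).  Then the `π`-torsion submodule `M[π] = {m | π • m = 0}` equals `π^(n-1) M`. -/
theorem stmt_16 {R : Type} [CommRing R] (π : R) (hπ : π ∈ nonZeroDivisors R)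
    (n : ℕ) (hn : 1 ≤ n)
    (M : Type) [AddCommGroup M] [Module R M]
    [Module (R ⧸ Ideal.span {π ^ n}) M]
    (hsc : ∀ (r : R) (x : M), (Ideal.Quotient.mk (Ideal.span {π ^ n}) r) • x = r • x)
    [Module.Flat (R ⧸ Ideal.span {π ^ n}) M] (x : M) :
    π • x = 0 ↔ x ∈ (π ^ (n - 1)) • (⊤ : Submodule R M) := by
  set S := R ⧸ Ideal.span {π ^ n}
  set q : R →+* S := Ideal.Quotient.mk (Ideal.span {π ^ n})
  have hqn : q (π ^ n) = 0 := Ideal.Quotient.eq_zero_iff_mem.mpr (Ideal.subset_span rfl)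
  have hpow : π ^ n = π * π ^ (n - 1) := by
    conv_lhs => rw [← Nat.sub_add_cancel hn]
    rw [pow_succ']
  -- exactness of multiplication maps on S
  have hexact : Function.Exact (LinearMap.lsmul S S (q (π ^ (n - 1))))
      (LinearMap.lsmul S S (q π)) := by
    intro y
    obtain ⟨a, rfl⟩ := Ideal.Quotient.mk_surjective y
    constructor
    · intro h
      have : q (π * a) = 0 := by
        simpa [map_mul] using h
      rw [Ideal.Quotient.eq_zero_iff_mem, Ideal.mem_span_singleton] at this
      obtain ⟨c, hc⟩ := this
      have ha : a = π ^ (n - 1) * c :=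
        (mul_cancel_left_mem_nonZeroDivisors hπ).mp (by rw [hc, hpow, mul_assoc])
      refine ⟨q c, ?_⟩
      simp only [LinearMap.lsmul_apply, smul_eq_mul, ← map_mul]
      rw [← ha]
    · rintro ⟨b, hb⟩
      simp only [LinearMap.lsmul_apply, smul_eq_mul] at hb ⊢
      rw [← hb, ← mul_assoc, ← map_mul, ← hpow, hqn, zero_mul]
  have hex2 := Module.Flat.lTensor_exact (R := S) M hexact
  -- transfer along M ⊗[S] S ≃ M
  set e : TensorProduct S M S ≃ₗ[S] M := TensorProduct.rid S M
  have h1 : ∀ a : S, ∀ z : TensorProduct S M S, e (LinearMap.lTensor M (LinearMap.lsmul S S a) z)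
      = a • e z := by
    intro a z
    rw [lTensor_lsmul_eq, map_smul]
  constructor
  · intro hx
    have hqx : (q π) • x = 0 := by rw [hsc]; exact hx
    have h0 : LinearMap.lTensor M (LinearMap.lsmul S S (q π)) (e.symm x) = 0 := by
      apply e.injective
      rw [h1, e.apply_symm_apply, map_zero]
      exact hqx
    obtain ⟨z, hz⟩ := (hex2 (e.symm x)).mp h0
    have hxz : (π ^ (n - 1)) • (e z) = x := by
      rw [← hsc, ← h1, hz, e.apply_symm_apply]
    rw [← hxz]
    exact Submodule.smul_mem_pointwise_smul _ _ _ trivial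
  · intro hx
    obtain ⟨y, -, rfl⟩ := hx
    show π • (π ^ (n - 1)) • y = 0
    rw [← hsc, ← hsc, smul_smul, ← map_mul, ← hpow, hqn, zero_smul]
end
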